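/- arXiv:1501.02607 — 4 statements merged into one kernel-verified Lean document; each statement's English description precedes it below -/
import Mathlib

section
/- Let G : Set S × Set S → Set S be completely additive in the product. Fix Y ⊆ S and let F(X) := G(X, Y). Then for every s ∈ S: s belongs to the least fixed point of F if and only if there exist elements t₁, ..., t_k ∈ S with t_k = s such that t₁ ∈ G(∅, Q) for some quasi-atom Q of Y (i.e., Q = ∅ or Q = {y} for some y ∈ Y), and for all 1 ≤ i < k, t_{i+1} ∈ G({t_i}, ∅). -/
def CompletelyAdditive2 {S : Type} (G : Set S → Set S → Set S) : Prop :=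
  ∀ (ι : Type) [Nonempty ι] (A B : ι → Set S),
    G (⋃ i, A i) (⋃ i, B i) = ⋃ i, G (A i) (B i)

def setLfp {S : Type} (F : Set S → Set S) : Set S :=
  ⋂₀ {X : Set S | F X ⊆ X}

/-!
Complete additivity writes `G X Y` as the union of `G A B` over quasi-atoms `A` of `X` and `B` of
`Y`, and splits `G {a} B = G {a} ∅ ∪ G ∅ B`. So an element of `G R Y`, where `R` is the set of
chain endpoints, either starts a chain or extends one by a step: `R` is a pre-fixed point of
`G · Y`. Conversely, by monotonicity every pre-fixed point contains each chain, by induction along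
it.
-/

open Set

def IsQuasiAtom {S : Type} (X Q : Set S) : Prop :=
  Q = ∅ ∨ ∃ x ∈ X, Q = {x}

theorem IsQuasiAtom.subset {S : Type} {X Q : Set S} (hQ : IsQuasiAtom X Q) : Q ⊆ X := by
  rcases hQ with rfl | ⟨x, hx, rfl⟩
  · exact empty_subset X
  · exact singleton_subset_iff.2 hx

theorem iUnion_quasiAtoms {S : Type} (X : Set S) :
    ⋃ Q : {Q // IsQuasiAtom X Q}, (Q : Set S) = X :=
  Subset.antisymm (iUnion_subset fun Q => Q.2.subset) fun x hx =>
    mem_iUnion.2 ⟨⟨{x}, Or.inr ⟨x, hx, rfl⟩⟩, rfl⟩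

instance {S : Type} (X : Set S) : Nonempty {Q // IsQuasiAtom X Q} :=
  ⟨⟨∅, Or.inl rfl⟩⟩

namespace CompletelyAdditive2

variable {S : Type} {G : Set S → Set S → Set S}

theorem union_union (hG : CompletelyAdditive2 G) (A₁ A₂ B₁ B₂ : Set S) :
    G (A₁ ∪ A₂) (B₁ ∪ B₂) = G A₁ B₁ ∪ G A₂ B₂ := by
  have h := hG Bool (fun b => cond b A₁ A₂) (fun b => cond b B₁ B₂)
  simp only [← union_eq_iUnion] at h
  rw [h, union_eq_iUnion]
  exact iUnion_congr fun b => by cases b <;> rfl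

theorem monotone (hG : CompletelyAdditive2 G) : Monotone (Function.uncurry G) := by
  intro p q hpq
  have h := hG.union_union p.1 q.1 p.2 q.2
  rw [union_eq_self_of_subset_left hpq.1, union_eq_self_of_subset_left hpq.2] at h
  show G p.1 p.2 ⊆ G q.1 q.2
  rw [h]
  exact subset_union_left

theorem iUnion_iUnion {ι κ : Type} [Nonempty ι] [Nonempty κ] (hG : CompletelyAdditive2 G)
    (A : ι → Set S) (B : κ → Set S) :
    G (⋃ i, A i) (⋃ j, B j) = ⋃ i, ⋃ j, G (A i) (B j) := by
  have hA : ⋃ p : ι × κ, A p.1 = ⋃ i, A i := iSup_prod.trans (by simp only [iSup_const]; rfl)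
  have hB : ⋃ p : ι × κ, B p.2 = ⋃ j, B j := iSup_prod.trans (by simp only [iSup_const]; rfl)
  rw [← hA, ← hB, hG]
  exact iSup_prod

theorem exists_quasiAtoms_of_mem (hG : CompletelyAdditive2 G) {X Y : Set S} {x : S}
    (hx : x ∈ G X Y) :
    ∃ A B, IsQuasiAtom X A ∧ IsQuasiAtom Y B ∧ x ∈ G A B := by
  have h := hG.iUnion_iUnion (fun A : {A // IsQuasiAtom X A} => A.1)
    (fun B : {B // IsQuasiAtom Y B} => B.1)
  rw [iUnion_quasiAtoms, iUnion_quasiAtoms] at h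
  obtain ⟨⟨A, hA⟩, ⟨B, hB⟩, hxAB⟩ := by simpa only [h, mem_iUnion] using hx
  exact ⟨A, B, hA, hB, hxAB⟩

end CompletelyAdditive2

theorem setLfp_eq_of_isLeast {S : Type} {F : Set S → Set S} {R : Set S}
    (h : IsLeast {X | F X ⊆ X} R) : setLfp F = R :=
  h.isGLB.sInf_eq

def chainReachable {S : Type} (G : Set S → Set S → Set S) (Y : Set S) : Set S :=
  {s | ∃ (k : ℕ) (t : ℕ → S), 1 ≤ k ∧ t k = s ∧
    (∃ Q : Set S, IsQuasiAtom Y Q ∧ t 1 ∈ G ∅ Q) ∧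
    (∀ i, 1 ≤ i → i < k → t (i + 1) ∈ G {t i} ∅)}

section chainReachable

variable {S : Type} {G : Set S → Set S → Set S} {Y : Set S}

theorem mem_chainReachable_of_mem_base {Q : Set S} {x : S} (hQ : IsQuasiAtom Y Q)
    (hx : x ∈ G ∅ Q) : x ∈ chainReachable G Y :=
  ⟨1, fun _ => x, le_rfl, rfl, ⟨Q, hQ, hx⟩, fun _ hi hik => absurd hik (not_lt.2 hi)⟩

theorem mem_chainReachable_of_step {a x : S} (ha : a ∈ chainReachable G Y)
    (hx : x ∈ G {a} ∅) : x ∈ chainReachable G Y := by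
  obtain ⟨k, t, hk, rfl, ⟨Q, hQ, ht₁⟩, hstep⟩ := ha
  refine ⟨k + 1, Function.update t (k + 1) x, by omega, by simp, ⟨Q, hQ, ?_⟩, ?_⟩
  · rwa [Function.update_of_ne (by omega)]
  · intro i hi hik
    rcases (by omega : i < k ∨ i = k) with hik | rfl
    · rw [Function.update_of_ne (by omega), Function.update_of_ne (by omega)]
      exact hstep i hi hik
    · rwa [Function.update_self, Function.update_of_ne (by omega)]

theorem CompletelyAdditive2.map_chainReachable_subset (hG : CompletelyAdditive2 G) :
    G (chainReachable G Y) Y ⊆ chainReachable G Y := by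
  intro x hx
  obtain ⟨A, B, rfl | ⟨a, ha, rfl⟩, hB, hxAB⟩ := hG.exists_quasiAtoms_of_mem hx
  · exact mem_chainReachable_of_mem_base hB hxAB
  · have hsplit : G {a} B = G {a} ∅ ∪ G ∅ B := by
      simpa only [union_empty, empty_union] using hG.union_union {a} ∅ ∅ B
    rcases hsplit ▸ hxAB with hx | hx
    · exact mem_chainReachable_of_step ha hx
    · exact mem_chainReachable_of_mem_base hB hx

theorem chainReachable_subset_of_map_subset (hmono : Monotone (Function.uncurry G)) {X : Set S}
    (hX : G X Y ⊆ X) : chainReachable G Y ⊆ X := by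
  rintro s ⟨k, t, hk, rfl, ⟨Q, hQ, ht₁⟩, hstep⟩
  have hsub {A B : Set S} (hA : A ⊆ X) (hB : B ⊆ Y) : G A B ⊆ X :=
    (hmono (Prod.mk_le_mk.2 ⟨hA, hB⟩)).trans hX
  suffices ∀ i, 1 ≤ i → i ≤ k → t i ∈ X from this k hk le_rfl
  intro i hi
  induction i, hi using Nat.le_induction with
  | base => exact fun _ => hsub (empty_subset X) hQ.subset ht₁
  | succ n hn ih =>
    exact fun hnk => hsub (singleton_subset_iff.2 (ih (by omega))) (empty_subset Y) (hstep n hn hnk)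

end chainReachable

theorem lfp_characterization_of_completelyAdditive2 {S : Type}
    (G : Set S → Set S → Set S) (h : CompletelyAdditive2 G)
    (Y : Set S) (s : S) :
    s ∈ setLfp (fun X => G X Y) ↔
      ∃ (k : ℕ) (t : ℕ → S), 1 ≤ k ∧ t k = s ∧
        (∃ Q : Set S, (Q = ∅ ∨ ∃ y ∈ Y, Q = {y}) ∧ t 1 ∈ G ∅ Q) ∧
        (∀ i, 1 ≤ i → i < k → t (i + 1) ∈ G {t i} ∅) := by
  have hlfp : setLfp (fun X => G X Y) = chainReachable G Y :=
    setLfp_eq_of_isLeast ⟨h.map_chainReachable_subset,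
      fun _ hX => chainReachable_subset_of_map_subset h.monotone hX⟩
  exact Set.ext_iff.1 hlfp s
end

section
/- Let G : Set S × Set S → Set S be completely additive in the product, and define H : Set S → Set S by H(Y) := LFP(X ↦ G(X, Y)) (the least fixed point in the first coordinate). Then H is completely additive: for every nonempty family {Y_i}, H(⋃_i Y_i) = ⋃_i H(Y_i). -/
/-!
The union `⋃ i, H (Y i)` is a prefixed point of `X ↦ G X (⋃ i, Y i)`: by complete additivity,
`G (⋃ i, H (Y i)) (⋃ i, Y i) = ⋃ i, G (H (Y i)) (Y i) ⊆ ⋃ i, H (Y i)`, so `H (⋃ i, Y i)` lies below it.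
Conversely `H` is monotone, since `G` is monotone in its second argument.
-/

def CompletelyAdditive {S : Type} (F : Set S → Set S) : Prop :=
  ∀ (ι : Type) [Nonempty ι] (Y : ι → Set S), F (⋃ i, Y i) = ⋃ i, F (Y i)

section setLfp

variable {S : Type}

lemma setLfp_subset {F : Set S → Set S} {X : Set S} (hX : F X ⊆ X) : setLfp F ⊆ X :=
  Set.sInter_subset_of_mem hX

lemma subset_setLfp {F : Set S → Set S} {X : Set S}
    (hX : ∀ Z, F Z ⊆ Z → X ⊆ Z) : X ⊆ setLfp F :=
  Set.subset_sInter hX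

lemma map_setLfp_subset {F : Set S → Set S} (hF : Monotone F) : F (setLfp F) ⊆ setLfp F :=
  subset_setLfp fun _ hX => (hF (setLfp_subset hX)).trans hX

lemma setLfp_mono {F F' : Set S → Set S} (hFF' : ∀ X, F X ⊆ F' X) : setLfp F ⊆ setLfp F' :=
  subset_setLfp fun _ hX => setLfp_subset ((hFF' _).trans hX)

end setLfp

namespace CompletelyAdditive2

variable {S : Type} {G : Set S → Set S → Set S}

lemma map_union (hG : CompletelyAdditive2 G) (A A' B B' : Set S) :
    G (A ∪ A') (B ∪ B') = G A B ∪ G A' B' := by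
  have := hG Bool (fun b => cond b A A') (fun b => cond b B B')
  rwa [← Set.union_eq_iUnion, ← Set.union_eq_iUnion, Set.iUnion, iSup_bool_eq] at this

lemma map_subset_map (hG : CompletelyAdditive2 G) {A A' B B' : Set S}
    (hA : A ⊆ A') (hB : B ⊆ B') : G A B ⊆ G A' B' := by
  rw [← Set.union_eq_right.mpr hA, ← Set.union_eq_right.mpr hB, hG.map_union]
  exact Set.subset_union_left

end CompletelyAdditive2

theorem lfp_preserves_completeAdditivity {S : Type}
    (G : Set S → Set S → Set S) (h : CompletelyAdditive2 G) :
    CompletelyAdditive (fun Y => setLfp (fun X => G X Y)) := by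
  intro ι _ Y
  apply Set.Subset.antisymm
  · apply setLfp_subset
    rw [h ι]
    exact Set.iUnion_mono fun i =>
      map_setLfp_subset fun _ _ hX => h.map_subset_map hX subset_rfl
  · exact Set.iUnion_subset fun i =>
      setLfp_mono fun X => h.map_subset_map subset_rfl (Set.subset_iUnion Y i)
end

section
/- Let F : Set S → Set S be completely additive, s ∈ S, and suppose s ∈ LFP(F). Then there exists a finite set Y = {t₁, ..., t_k} ⊆ S with t_k = s such that s ∈ LFP(F↾Y), where F↾Y(X) := F(X) ∩ Y, and moreover t_{i+1} ∈ (F↾Y)^{i+1}(∅) \ (F↾Y)^i(∅) for each i < k. -/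
def approx {S : Type} (F : Set S → Set S) : ℕ → Set S
  | 0 => ∅
  | n + 1 => F (approx F n)

/-!
Complete additivity makes `⋃ n, Fⁿ(∅)` a pre-fixed point, so `s` enters the approximants at some
first stage `k`. Since `F` distributes over the singletons of its argument, every element that is
new at stage `i + 1` is already produced by `F` from a single element that is new at stage `i`;
following these witnesses back from `s` gives elements `t₁, …, t_k = s` with `t₁ ∈ F ∅` and
`t_{i+1} ∈ F {t_i}`. This chain survives the restriction to `Y = {t₁, …, t_k}` and places `t_i`
in the `i`-th approximant of `F↾Y`; it is not in an earlier one, since `F↾Y ≤ F` and `t_i` is new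
at stage `i` for `F`.
-/

variable {S : Type}

namespace CompletelyAdditive

variable {F : Set S → Set S} (hca : CompletelyAdditive F)
include hca

theorem monotone : Monotone F := by
  intro A B hAB
  calc F A = F (cond true A B) := rfl
    _ ⊆ ⋃ b, F (cond b A B) := Set.subset_iUnion (fun b => F (cond b A B)) true
    _ = F (A ∪ B) := by rw [Set.union_eq_iUnion, hca]
    _ = F B := by rw [Set.union_eq_right.2 hAB]

theorem exists_mem_singleton {A : Set S} (hA : A.Nonempty) {x : S} (hx : x ∈ F A) :
    ∃ a ∈ A, x ∈ F {a} := by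
  have : Nonempty A := hA.to_subtype
  rw [← Set.iUnion_of_singleton_coe A, hca A (fun a => {(a : S)})] at hx
  obtain ⟨a, ha⟩ := Set.mem_iUnion.1 hx
  exact ⟨a, a.2, ha⟩

end CompletelyAdditive

section Approx

variable {F G : Set S → Set S}

theorem approx_monotone (hF : Monotone F) : Monotone (approx F) := by
  refine monotone_nat_of_le_succ fun n => ?_
  induction n with
  | zero => exact Set.empty_subset _
  | succ n ih => exact hF ih

theorem approx_subset_approx (hF : Monotone F) (hGF : G ≤ F) (n : ℕ) :
    approx G n ⊆ approx F n := by
  induction n with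
  | zero => exact Set.empty_subset _
  | succ n ih => exact (hGF _).trans (hF ih)

theorem approx_subset_setLfp (hF : Monotone F) (n : ℕ) : approx F n ⊆ setLfp F := by
  refine Set.subset_sInter fun X (hX : F X ⊆ X) => ?_
  induction n with
  | zero => exact Set.empty_subset _
  | succ n ih => exact (hF ih).trans hX

theorem setLfp_subset_iUnion_approx (hca : CompletelyAdditive F) :
    setLfp F ⊆ ⋃ n, approx F n := by
  refine Set.sInter_subset_of_mem (show F (⋃ n, approx F n) ⊆ ⋃ n, approx F n from ?_)
  rw [hca ℕ (approx F)]
  exact Set.iUnion_subset fun n => Set.subset_iUnion (approx F) (n + 1)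

theorem exists_mem_approx_succ_diff {x : S} {n : ℕ} (hx : x ∈ approx F n) :
    ∃ m, x ∈ approx F (m + 1) \ approx F m := by
  induction n with
  | zero => exact hx.elim
  | succ n ih =>
    by_cases hxn : x ∈ approx F n
    · exact ih hxn
    · exact ⟨n, hx, hxn⟩

end Approx

def IsDerivationChain (F : Set S → Set S) (u : ℕ → S) (n : ℕ) : Prop :=
  u 0 ∈ F ∅ ∧ ∀ i < n, u (i + 1) ∈ F {u i}

namespace IsDerivationChain

variable {F : Set S → Set S} {u : ℕ → S} {n : ℕ}

theorem restrict (hu : IsDerivationChain F u n) {Y : Set S} (hY : ∀ i ≤ n, u i ∈ Y) :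
    IsDerivationChain (fun X => F X ∩ Y) u n :=
  ⟨⟨hu.1, hY 0 (Nat.zero_le n)⟩, fun i hi => ⟨hu.2 i hi, hY (i + 1) hi⟩⟩

theorem mem_approx (hF : Monotone F) (hu : IsDerivationChain F u n) :
    ∀ i ≤ n, u i ∈ approx F (i + 1) := by
  intro i hi
  induction i with
  | zero => exact hu.1
  | succ i ih =>
    have hsingleton : ({u i} : Set S) ⊆ approx F (i + 1) :=
      Set.singleton_subset_iff.2 (ih (by omega))
    exact hF hsingleton (hu.2 i hi)

end IsDerivationChain

theorem CompletelyAdditive.exists_mem_approx_diff_singleton {F : Set S → Set S}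
    (hca : CompletelyAdditive F) {n : ℕ} {x : S} (hx : x ∈ approx F (n + 2) \ approx F (n + 1)) :
    ∃ a ∈ approx F (n + 1) \ approx F n, x ∈ F {a} := by
  have hmono := hca.monotone
  have hne : (approx F (n + 1)).Nonempty := by
    refine Set.nonempty_iff_ne_empty.2 fun hempty => hx.2 ?_
    have hx1 : x ∈ approx F 1 := by
      show x ∈ F ∅
      rw [← hempty]
      exact hx.1
    exact approx_monotone hmono (by omega) hx1
  obtain ⟨a, ha, hxa⟩ := hca.exists_mem_singleton hne hx.1
  exact ⟨a, ⟨ha, fun h => hx.2 (hmono (Set.singleton_subset_iff.2 h) hxa)⟩, hxa⟩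

theorem CompletelyAdditive.exists_derivationChain {F : Set S → Set S}
    (hca : CompletelyAdditive F) {n : ℕ} {x : S}
    (hx : x ∈ approx F (n + 1)) (hxn : x ∉ approx F n) :
    ∃ u : ℕ → S, u n = x ∧ IsDerivationChain F u n ∧ ∀ i ≤ n, u i ∉ approx F i := by
  induction n generalizing x with
  | zero =>
    refine ⟨fun _ => x, rfl, ⟨hx, nofun⟩, fun i hi => ?_⟩
    rwa [Nat.le_zero.1 hi]
  | succ n ih =>
    obtain ⟨a, ⟨ha, han⟩, hxa⟩ := hca.exists_mem_approx_diff_singleton ⟨hx, hxn⟩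
    obtain ⟨u, hua, hu, hu_not⟩ := ih ha han
    refine ⟨Function.update u (n + 1) x, Function.update_self .., ⟨?_, fun i hi => ?_⟩, ?_⟩
    · rw [Function.update_of_ne (by omega)]
      exact hu.1
    · rw [Function.update_of_ne (by omega)]
      rcases Nat.lt_succ_iff_lt_or_eq.1 hi with hi | rfl
      · rw [Function.update_of_ne (by omega)]
        exact hu.2 i hi
      · rwa [Function.update_self, hua]
    · intro i hi
      rcases Nat.lt_or_eq_of_le hi with hi | rfl
      · rw [Function.update_of_ne (by omega)]
        exact hu_not i (by omega)
      · rwa [Function.update_self]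

theorem lfp_restricts_to_finite_set {S : Type} (F : Set S → Set S)
    (hca : CompletelyAdditive F) (s : S) (hs : s ∈ setLfp F) :
    ∃ (k : ℕ) (t : ℕ → S) (Y : Set S), 1 ≤ k ∧ t k = s ∧
      Y = t '' (Set.Icc 1 k) ∧
      s ∈ setLfp (fun X => F X ∩ Y) ∧
      ∀ i < k, t (i + 1) ∈
        approx (fun X => F X ∩ Y) (i + 1) \ approx (fun X => F X ∩ Y) i := by
  obtain ⟨n, hsn⟩ := Set.mem_iUnion.1 (setLfp_subset_iUnion_approx hca hs)
  obtain ⟨m, hsm, hsm'⟩ := exists_mem_approx_succ_diff hsn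
  obtain ⟨u, hus, hu, hu_not⟩ := hca.exists_derivationChain hsm hsm'
  set t : ℕ → S := fun i => u (i - 1)
  set Y := t '' Set.Icc 1 (m + 1)
  have hmono := hca.monotone
  have hGmono : Monotone fun X => F X ∩ Y := hmono.inter monotone_const
  have huY : ∀ i ≤ m, u i ∈ Y := fun i hi => ⟨i + 1, ⟨by omega, by omega⟩, rfl⟩
  have hmem := (hu.restrict huY).mem_approx hGmono
  refine ⟨m + 1, t, Y, by omega, hus, rfl, ?_, fun i hi => ⟨hmem i (by omega), fun h => ?_⟩⟩
  · exact approx_subset_setLfp hGmono (m + 1) (hus ▸ hmem m le_rfl)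
  · exact hu_not i (by omega)
      (approx_subset_approx hmono (fun X => Set.inter_subset_left) i h)
end

section
/- Let M be a set with binary relation R, and let G : Set M → Set M be monotone and restrict to descendants. For s ∈ M define F_s(X) := G(X ∩ R*[s]) ∩ R*[s]. Then for every t ∈ R*[s] and every n ∈ ℕ: t ∈ G^n(∅) iff t ∈ F_s^n(∅), where the n-th approximants are defined by H^0(∅) = ∅ and H^{n+1}(∅) = H(H^n(∅)). -/
def desc {M : Type} (R : M → M → Prop) (s : M) : Set M :=
  {t | Relation.ReflTransGen R s t}

/-! Since `G` only looks at descendants, restricting it to a set `D` closed under descendants does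
not change which points of `D` lie in `G X`. By induction, the approximants of the restricted
operator are those of `G` intersected with `D`; then take `D = desc R s`. -/

def RestrictsToDescendants {M : Type} (R : M → M → Prop) (G : Set M → Set M) : Prop :=
  ∀ (s : M) (X : Set M), s ∈ G X ↔ s ∈ G (X ∩ desc R s)

theorem desc_subset_desc {M : Type} {R : M → M → Prop} {s t : M} (ht : t ∈ desc R s) :
    desc R t ⊆ desc R s :=
  fun _ hu => Relation.ReflTransGen.trans ht hu

section RestrictsToDescendants

variable {M : Type} {R : M → M → Prop} {G : Set M → Set M} {D : Set M}

theorem RestrictsToDescendants.mem_apply_inter_iff (hG : RestrictsToDescendants R G) {t : M}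
    (ht : desc R t ⊆ D) (X : Set M) : t ∈ G (X ∩ D) ↔ t ∈ G X := by
  rw [hG t X, hG t (X ∩ D), Set.inter_assoc, Set.inter_eq_right.mpr ht]

theorem RestrictsToDescendants.apply_inter_inter_eq (hG : RestrictsToDescendants R G)
    (hD : ∀ t ∈ D, desc R t ⊆ D) (X : Set M) : G (X ∩ D) ∩ D = G X ∩ D :=
  Set.ext fun t => and_congr_left fun htD => hG.mem_apply_inter_iff (hD t htD) X

theorem RestrictsToDescendants.approx_restrict_eq (hG : RestrictsToDescendants R G)
    (hD : ∀ t ∈ D, desc R t ⊆ D) (n : ℕ) :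
    approx (fun X => G (X ∩ D) ∩ D) n = approx G n ∩ D := by
  induction n with
  | zero => simp [approx]
  | succ n ih =>
    change G (approx _ n ∩ D) ∩ D = G (approx G n) ∩ D
    rw [ih, Set.inter_assoc, Set.inter_self, hG.apply_inter_inter_eq hD]

end RestrictsToDescendants

theorem approximants_restrict_to_descendants_general {M : Type} (R : M → M → Prop)
    (G : Set M → Set M)
    (hdesc : ∀ (s : M) (X : Set M), s ∈ G X ↔ s ∈ G (X ∩ desc R s)) (s : M) :
    ∀ t ∈ desc R s, ∀ n : ℕ,
      t ∈ approx G n ↔ t ∈ approx (fun X => G (X ∩ desc R s) ∩ desc R s) n := by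
  intro t ht n
  have hG : RestrictsToDescendants R G := hdesc
  rw [hG.approx_restrict_eq (fun _ => desc_subset_desc) n]
  exact (and_iff_left ht).symm

theorem approximants_restrict_to_descendants {M : Type} (R : M → M → Prop)
    (G : Set M → Set M)
    (hmono : ∀ X Y : Set M, X ⊆ Y → G X ⊆ G Y)
    (hdesc : ∀ (s : M) (X : Set M), s ∈ G X ↔ s ∈ G (X ∩ desc R s)) (s : M) :
    ∀ t ∈ desc R s, ∀ n : ℕ,
      t ∈ approx G n ↔ t ∈ approx (fun X => G (X ∩ desc R s) ∩ desc R s) n :=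
  approximants_restrict_to_descendants_general R G hdesc s
end
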